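/- Let x, x′, p, q be points of the hyperbolic plane ℍ such that p is the midpoint of x and x′ (dist x p = dist p x′ = (1/2)·dist x x′), and suppose cosh(dist q x) ≥ cosh(dist p x) · cosh(dist p q) (by the hyperbolic law of cosines, this says the angle at p between the segments [p,x] and [p,q] is at least π/2). Then dist q x′ ≤ dist q x. -/

import Mathlib

/-!
Embed `ℍ` isometrically in the hyperboloid `⟪v, v⟫ = 1` of Minkowski space `ℝ^{1,2}`, where
`cosh (dist z w) = ⟪z, w⟫`. If `p` is the midpoint of `x` and `x'` at distance `d` from both,
then `x + x' - 2 cosh d • p` is a null vector orthogonal to the timelike vector `x`, hence zero.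
Pairing `x + x' = 2 cosh d • p` with `q` gives the median formula
`cosh (dist q x) + cosh (dist q x') = 2 cosh d · cosh (dist q p)`, and the angle hypothesis says
that the first summand is at least half the right-hand side.
-/

open Real

def minkowskiForm (v w : Fin 3 → ℝ) : ℝ := v 0 * w 0 - v 1 * w 1 - v 2 * w 2

theorem eq_zero_of_minkowskiForm_self_eq_zero_of_orthogonal {v x : Fin 3 → ℝ}
    (hx : 0 < minkowskiForm x x) (hvv : minkowskiForm v v = 0) (hvx : minkowskiForm v x = 0) :
    v = 0 := by
  -- the reversed Cauchy–Schwarz inequality, as an identity for null `v` orthogonal to `x`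
  have key : minkowskiForm x x * v 0 ^ 2 + (v 1 * x 2 - v 2 * x 1) ^ 2 = 0 := by
    simp only [minkowskiForm] at hvv hvx ⊢
    linear_combination (v 0 * x 0 + v 1 * x 1 + v 2 * x 2) * hvx - (x 1 ^ 2 + x 2 ^ 2) * hvv
  have h0 : v 0 = 0 := by
    have := (add_eq_zero_iff_of_nonneg (by positivity) (sq_nonneg _)).mp key |>.1
    simpa [hx.ne'] using this
  simp only [minkowskiForm, h0] at hvv
  have h1 : v 1 = 0 := by nlinarith [sq_nonneg (v 1), sq_nonneg (v 2)]
  have h2 : v 2 = 0 := by nlinarith [sq_nonneg (v 1), sq_nonneg (v 2)]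
  ext i; fin_cases i <;> assumption

theorem add_eq_smul_of_minkowskiForm_midpoint {x x' p : Fin 3 → ℝ} {u : ℝ}
    (hx : minkowskiForm x x = 1) (hx' : minkowskiForm x' x' = 1) (hp : minkowskiForm p p = 1)
    (hxp : minkowskiForm x p = u) (hx'p : minkowskiForm x' p = u)
    (hxx' : minkowskiForm x x' = 2 * u ^ 2 - 1) :
    x + x' = (2 * u) • p := by
  rw [← sub_eq_zero]
  apply eq_zero_of_minkowskiForm_self_eq_zero_of_orthogonal (hx ▸ one_pos)
  all_goals simp only [minkowskiForm, Pi.sub_apply, Pi.add_apply, Pi.smul_apply, smul_eq_mul]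
    at hx hx' hp hxp hx'p hxx' ⊢
  · linear_combination hx + hx' + 4 * u ^ 2 * hp + 2 * hxx' - 4 * u * hxp - 4 * u * hx'p
  · linear_combination hx + hxx' - 2 * u * hxp

namespace UpperHalfPlane

noncomputable def toHyperboloid (z : ℍ) : Fin 3 → ℝ :=
  ![(z.re ^ 2 + z.im ^ 2 + 1) / (2 * z.im), z.re / z.im, (z.re ^ 2 + z.im ^ 2 - 1) / (2 * z.im)]

theorem minkowskiForm_toHyperboloid (z w : ℍ) :
    minkowskiForm (toHyperboloid z) (toHyperboloid w) = cosh (dist z w) := by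
  have := z.im_pos.ne'
  have := w.im_pos.ne'
  rw [cosh_dist']
  simp only [minkowskiForm, toHyperboloid, Matrix.cons_val]
  field_simp
  ring

theorem minkowskiForm_toHyperboloid_self (z : ℍ) :
    minkowskiForm (toHyperboloid z) (toHyperboloid z) = 1 := by
  rw [minkowskiForm_toHyperboloid, dist_self, cosh_zero]

theorem toHyperboloid_add_of_midpoint {x x' p : ℍ} (hx'p : dist x' p = dist x p)
    (hxx' : dist x x' = 2 * dist x p) :
    toHyperboloid x + toHyperboloid x' = (2 * cosh (dist x p)) • toHyperboloid p := by
  refine add_eq_smul_of_minkowskiForm_midpoint (minkowskiForm_toHyperboloid_self x)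
    (minkowskiForm_toHyperboloid_self x') (minkowskiForm_toHyperboloid_self p)
    (minkowskiForm_toHyperboloid x p) ?_ ?_
  · rw [minkowskiForm_toHyperboloid, hx'p]
  · rw [minkowskiForm_toHyperboloid, hxx', cosh_two_mul, cosh_sq]
    ring

theorem cosh_dist_add_cosh_dist_of_midpoint {x x' p : ℍ} (q : ℍ) (hx'p : dist x' p = dist x p)
    (hxx' : dist x x' = 2 * dist x p) :
    cosh (dist q x) + cosh (dist q x') = 2 * cosh (dist x p) * cosh (dist q p) := by
  have hmid := congrArg (minkowskiForm (toHyperboloid q)) (toHyperboloid_add_of_midpoint hx'p hxx')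
  rw [← minkowskiForm_toHyperboloid q x, ← minkowskiForm_toHyperboloid q x',
    ← minkowskiForm_toHyperboloid q p]
  simp only [minkowskiForm, Pi.add_apply, Pi.smul_apply, smul_eq_mul] at hmid ⊢
  linear_combination hmid

end UpperHalfPlane

/-- In the hyperbolic plane, if `p` is the midpoint of `x` and `x'`, and the angle at `p`
between the segments `[p,x]` and `[p,q]` is at least `π/2` (expressed via the hyperbolic
law of cosines as `cosh (dist q x) ≥ cosh (dist p x) * cosh (dist p q)`), then
`dist q x' ≤ dist q x`. -/
theorem hyperbolic_reflection_decreases_dist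
    (x x' p q : UpperHalfPlane)
    (hp1 : dist x p = dist p x') (hp2 : dist p x' = (1 / 2) * dist x x')
    (hangle : Real.cosh (dist q x) ≥ Real.cosh (dist p x) * Real.cosh (dist p q)) :
    dist q x' ≤ dist q x := by
  have hmedian := UpperHalfPlane.cosh_dist_add_cosh_dist_of_midpoint (x := x) (x' := x') (p := p) q
    (by rw [dist_comm, hp1]) (by rw [hp1, hp2]; ring)
  rw [dist_comm p x, dist_comm p q] at hangle
  have hcosh : cosh (dist q x') ≤ cosh (dist q x) := by linarith
  exact cosh_strictMonoOn.le_iff_le dist_nonneg dist_nonneg |>.mp hcosh
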